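/- arXiv:1407.3326 — 2 statements merged into one kernel-verified Lean document; each statement's English description precedes it below -/
import Mathlib

section
/- Let V be a finite-dimensional real inner product space with decomposition V = Z ⊕ Z⊥ for a subspace Z, and let {u₁,…,u_m} be an orthonormal basis of Z. Then the composite E_{u₁} ∘ ⋯ ∘ E_{u_m} : C(V) → C(V), where E_u(c) = ½(c + u·γ(c)·u), is a projection whose range is exactly the subalgebra C(Z⊥) generated by Z⊥. -/
open CliffordAlgebra InnerProductSpace

noncomputable def Eproj {V : Type*} [NormedAddCommGroup V] [InnerProductSpace ℝ V]
    (Q : QuadraticForm ℝ V) (u : V) (c : CliffordAlgebra Q) : CliffordAlgebra Q :=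
  (1/2 : ℝ) • (c + ι Q u * involute c * ι Q u)

noncomputable def EprojComp {V : Type*} [NormedAddCommGroup V] [InnerProductSpace ℝ V]
    (Q : QuadraticForm ℝ V) : List V → CliffordAlgebra Q → CliffordAlgebra Q
  | [], c => c
  | u :: t, c => Eproj Q u (EprojComp Q t c)

/-!
If `u ⟂ S`, then `ι u` anticommutes with `ι S`, so `ι u * x = involute x * ι u` for `x ∈ C(S)`.
Consequently every element of `C(ℝ u ⊕ S)` can be written `a + ι u * b` with `a, b ∈ C(S)`, and
for a unit vector `u` the conjugation `c ↦ ι u * involute c * ι u` sends it to `a - ι u * b`: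
`E_u` is the projection `a + ι u * b ↦ a` onto `C(S)`. Splitting off the orthonormal vectors
`u_i` one at a time, the composite maps `C(V)` into `C(Z⊥)`, and it fixes `C(Z⊥)` pointwise.
-/

namespace CliffordAlgebra

variable {R M : Type*} [CommRing R] [AddCommGroup M] [Module R M] {Q : QuadraticForm R M}

theorem involute_mem_adjoin_ι_image {S : Submodule R M} {x : CliffordAlgebra Q}
    (hx : x ∈ Algebra.adjoin R (ι Q '' (S : Set M))) :
    involute x ∈ Algebra.adjoin R (ι Q '' (S : Set M)) := by
  induction hx using Algebra.adjoin_induction with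
  | mem y hy =>
    obtain ⟨w, hw, rfl⟩ := hy
    rw [involute_ι, ← map_neg]
    exact Algebra.subset_adjoin ⟨-w, S.neg_mem hw, rfl⟩
  | algebraMap r => simp
  | add y z _ _ hy hz => simpa using add_mem hy hz
  | mul y z _ _ hy hz => simpa using mul_mem hy hz

theorem ι_mul_eq_involute_mul_ι {u : M} {S : Set M} (hS : ∀ w ∈ S, Q.IsOrtho u w)
    {x : CliffordAlgebra Q} (hx : x ∈ Algebra.adjoin R (ι Q '' S)) :
    ι Q u * x = involute x * ι Q u := by
  induction hx using Algebra.adjoin_induction with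
  | mem y hy =>
    obtain ⟨w, hw, rfl⟩ := hy
    rw [involute_ι, ι_mul_ι_comm_of_isOrtho (hS w hw), neg_mul]
  | algebraMap r => simp [Algebra.commutes]
  | add y z _ _ hy hz => rw [mul_add, map_add, add_mul, hy, hz]
  | mul y z _ _ hy hz => rw [← mul_assoc, hy, mul_assoc, hz, ← mul_assoc, map_mul]

theorem mul_ι_eq_ι_mul_involute {u : M} {S : Submodule R M} (hS : ∀ w ∈ S, Q.IsOrtho u w)
    {x : CliffordAlgebra Q} (hx : x ∈ Algebra.adjoin R (ι Q '' (S : Set M))) :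
    x * ι Q u = ι Q u * involute x := by
  simpa using (ι_mul_eq_involute_mul_ι hS (involute_mem_adjoin_ι_image hx)).symm

theorem ι_mul_involute_add_ι_mul_mul_ι {u : M} {S : Submodule R M}
    (hS : ∀ w ∈ S, Q.IsOrtho u w) {a b : CliffordAlgebra Q}
    (ha : a ∈ Algebra.adjoin R (ι Q '' (S : Set M)))
    (hb : b ∈ Algebra.adjoin R (ι Q '' (S : Set M))) :
    ι Q u * involute (a + ι Q u * b) * ι Q u = algebraMap R _ (Q u) * (a - ι Q u * b) := by
  have ha' : involute a * ι Q u = ι Q u * a := by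
    simpa using mul_ι_eq_ι_mul_involute hS (involute_mem_adjoin_ι_image ha)
  have hb' : involute b * ι Q u = ι Q u * b := by
    simpa using mul_ι_eq_ι_mul_involute hS (involute_mem_adjoin_ι_image hb)
  calc ι Q u * involute (a + ι Q u * b) * ι Q u
      = ι Q u * (involute a * ι Q u) - ι Q u * ι Q u * (involute b * ι Q u) := by
        simp only [map_add, map_mul, involute_ι]; noncomm_ring
    _ = ι Q u * ι Q u * (a - ι Q u * b) := by rw [ha', hb']; noncomm_ring
    _ = algebraMap R _ (Q u) * (a - ι Q u * b) := by rw [ι_sq_scalar]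

theorem exists_eq_add_ι_mul_of_mem_adjoin {u : M} {S : Submodule R M}
    (hS : ∀ w ∈ S, Q.IsOrtho u w) {x : CliffordAlgebra Q}
    (hx : x ∈ Algebra.adjoin R (ι Q '' ((R ∙ u ⊔ S : Submodule R M) : Set M))) :
    ∃ a ∈ Algebra.adjoin R (ι Q '' (S : Set M)), ∃ b ∈ Algebra.adjoin R (ι Q '' (S : Set M)),
      x = a + ι Q u * b := by
  induction hx using Algebra.adjoin_induction with
  | mem y hy =>
    obtain ⟨_, hy, rfl⟩ := hy
    obtain ⟨z, hz, s, hs, rfl⟩ := Submodule.mem_sup.mp hy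
    obtain ⟨r, rfl⟩ := Submodule.mem_span_singleton.mp hz
    refine ⟨ι Q s, Algebra.subset_adjoin ⟨s, hs, rfl⟩, algebraMap R _ r,
      Subalgebra.algebraMap_mem _ r, ?_⟩
    rw [← Algebra.commutes, ← Algebra.smul_def, map_add, map_smul, add_comm]
  | algebraMap r =>
    exact ⟨algebraMap R _ r, Subalgebra.algebraMap_mem _ r, 0, zero_mem _, by simp⟩
  | add y z _ _ hy hz =>
    obtain ⟨a, ha, b, hb, rfl⟩ := hy
    obtain ⟨a', ha', b', hb', rfl⟩ := hz
    exact ⟨a + a', add_mem ha ha', b + b', add_mem hb hb', by rw [mul_add]; abel⟩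
  | mul y z _ _ hy hz =>
    obtain ⟨a, ha, b, hb, rfl⟩ := hy
    obtain ⟨a', ha', b', hb', rfl⟩ := hz
    have hia := involute_mem_adjoin_ι_image ha
    have hib := involute_mem_adjoin_ι_image hb
    refine ⟨a * a' + algebraMap R _ (Q u) * (involute b * b'),
      add_mem (mul_mem ha ha')
        (mul_mem (Subalgebra.algebraMap_mem _ _) (mul_mem hib hb')),
      involute a * b' + b * a', add_mem (mul_mem hia hb') (mul_mem hb ha'), ?_⟩
    have e1 : a * (ι Q u * b') = ι Q u * (involute a * b') := by
      rw [← mul_assoc, mul_ι_eq_ι_mul_involute hS ha, mul_assoc]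
    have e2 : ι Q u * b * (ι Q u * b') = algebraMap R _ (Q u) * (involute b * b') := by
      rw [mul_assoc, ← mul_assoc b, mul_ι_eq_ι_mul_involute hS hb, ← ι_sq_scalar]
      noncomm_ring
    calc (a + ι Q u * b) * (a' + ι Q u * b')
        = a * a' + a * (ι Q u * b') + ι Q u * b * a' + ι Q u * b * (ι Q u * b') := by
          noncomm_ring
      _ = _ := by rw [e1, e2]; noncomm_ring

end CliffordAlgebra

section InnerProductSpace

variable {V : Type*} [NormedAddCommGroup V] [InnerProductSpace ℝ V] {Q : QuadraticForm ℝ V}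

theorem isOrtho_iff_inner_eq_zero (hQ : ∀ v : V, Q v = ⟪v, v⟫_ℝ) {a b : V} :
    Q.IsOrtho a b ↔ ⟪a, b⟫_ℝ = 0 := by
  rw [QuadraticMap.isOrtho_def, hQ, hQ, hQ, real_inner_add_add_self]
  constructor <;> intro h <;> linarith

theorem Eproj_add_ι_mul {u : V} (hu : Q u = 1) {S : Submodule ℝ V}
    (hS : ∀ w ∈ S, Q.IsOrtho u w) {a b : CliffordAlgebra Q}
    (ha : a ∈ Algebra.adjoin ℝ (ι Q '' (S : Set V)))
    (hb : b ∈ Algebra.adjoin ℝ (ι Q '' (S : Set V))) :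
    Eproj Q u (a + ι Q u * b) = a := by
  rw [Eproj, ι_mul_involute_add_ι_mul_mul_ι hS ha hb, hu, map_one, one_mul,
    add_add_sub_cancel, ← two_smul ℝ a, smul_smul]
  norm_num

theorem Eproj_eq_self_of_mem_adjoin {u : V} (hu : Q u = 1) {S : Submodule ℝ V}
    (hS : ∀ w ∈ S, Q.IsOrtho u w) {x : CliffordAlgebra Q}
    (hx : x ∈ Algebra.adjoin ℝ (ι Q '' (S : Set V))) :
    Eproj Q u x = x := by
  simpa using Eproj_add_ι_mul hu hS hx (zero_mem _)

theorem EprojComp_eq_self_of_mem_adjoin {l : List V} {S : Submodule ℝ V}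
    (hl : ∀ v ∈ l, Q v = 1 ∧ ∀ w ∈ S, Q.IsOrtho v w) {x : CliffordAlgebra Q}
    (hx : x ∈ Algebra.adjoin ℝ (ι Q '' (S : Set V))) :
    EprojComp Q l x = x := by
  induction l with
  | nil => rfl
  | cons v t ih =>
    obtain ⟨hv, hvS⟩ := hl v List.mem_cons_self
    rw [EprojComp, ih fun w hw => hl w (List.mem_cons_of_mem _ hw),
      Eproj_eq_self_of_mem_adjoin hv hvS hx]

theorem EprojComp_mem_adjoin_orthogonal (hQ : ∀ v : V, Q v = ⟪v, v⟫_ℝ) {l : List V}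
    (hunit : ∀ v ∈ l, Q v = 1) (hpair : l.Pairwise fun a b => ⟪a, b⟫_ℝ = 0)
    (c : CliffordAlgebra Q) :
    EprojComp Q l c ∈
      Algebra.adjoin ℝ (ι Q '' ((Submodule.span ℝ {v | v ∈ l})ᗮ : Set V)) := by
  induction l with
  | nil =>
    simp only [List.not_mem_nil, Set.ofPred_false, Submodule.span_empty,
      Submodule.bot_orthogonal_eq_top, Submodule.top_coe, Set.image_univ, adjoin_range_ι]
    trivial
  | cons v t ih =>
    obtain ⟨hvt, hpt⟩ := List.pairwise_cons.mp hpair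
    set T := (Submodule.span ℝ {w | w ∈ t})ᗮ
    have hvT : v ∈ T := (Submodule.span_singleton_le_iff_mem _ _).mp
      (Submodule.isOrtho_span.mpr (by simpa using hvt)).le
    have hsplit : ℝ ∙ v ⊔ (ℝ ∙ v)ᗮ ⊓ T = T :=
      Submodule.sup_orthogonal_inf_of_hasOrthogonalProjection
        ((Submodule.span_singleton_le_iff_mem _ _).mpr hvT)
    have hortho : ∀ w ∈ (ℝ ∙ v)ᗮ ⊓ T, Q.IsOrtho v w := fun w hw =>
      (isOrtho_iff_inner_eq_zero hQ).mpr
        (Submodule.mem_orthogonal_singleton_iff_inner_right.mp hw.1)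
    have hc := ih (fun w hw => hunit w (List.mem_cons_of_mem _ hw)) hpt
    rw [← hsplit] at hc
    obtain ⟨a, ha, b, hb, hab⟩ := CliffordAlgebra.exists_eq_add_ι_mul_of_mem_adjoin hortho hc
    have hspan : (Submodule.span ℝ {w | w ∈ v :: t})ᗮ = (ℝ ∙ v)ᗮ ⊓ T := by
      rw [Submodule.inf_orthogonal, ← Submodule.span_insert]
      congr 2
      ext w
      simp
    rw [EprojComp, hab, Eproj_add_ι_mul (hunit v List.mem_cons_self) hortho ha hb, hspan]
    exact ha

end InnerProductSpace

theorem stmt11_general {V : Type*} [NormedAddCommGroup V] [InnerProductSpace ℝ V]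
    (Q : QuadraticForm ℝ V) (hQ : ∀ v : V, Q v = ⟪v, v⟫_ℝ)
    (Z : Submodule ℝ V) (m : ℕ) (u : Fin m → V) (hON : Orthonormal ℝ u)
    (hspan : Submodule.span ℝ (Set.range u) = Z) :
    (∀ c, EprojComp Q (List.ofFn u) (EprojComp Q (List.ofFn u) c) =
        EprojComp Q (List.ofFn u) c) ∧
      Set.range (EprojComp Q (List.ofFn u)) =
        (Algebra.adjoin ℝ (ι Q '' (Zᗮ : Set V)) : Set (CliffordAlgebra Q)) := by
  have hmemZ : ∀ v ∈ List.ofFn u, v ∈ Z := fun v hv =>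
    hspan ▸ Submodule.subset_span ((List.mem_ofFn' u v).mp hv)
  have hunit : ∀ v ∈ List.ofFn u, Q v = 1 := by
    intro v hv
    obtain ⟨i, rfl⟩ := (List.mem_ofFn' u v).mp hv
    rw [hQ, real_inner_self_eq_norm_sq, hON.1 i, one_pow]
  have hpair : (List.ofFn u).Pairwise fun a b => ⟪a, b⟫_ℝ = 0 :=
    List.pairwise_ofFn.mpr fun _ _ hij => hON.2 hij.ne
  have hZ : Submodule.span ℝ {v | v ∈ List.ofFn u} = Z := by
    simpa only [List.mem_ofFn', Set.ofPred_mem_eq] using hspan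
  have hmem := hZ ▸ EprojComp_mem_adjoin_orthogonal hQ hunit hpair
  have hfix : ∀ x ∈ Algebra.adjoin ℝ (ι Q '' (Zᗮ : Set V)), EprojComp Q (List.ofFn u) x = x :=
    fun _ => EprojComp_eq_self_of_mem_adjoin fun v hv => ⟨hunit v hv, fun _ hw =>
      (isOrtho_iff_inner_eq_zero hQ).mpr (Submodule.inner_right_of_mem_orthogonal (hmemZ v hv) hw)⟩
  exact ⟨fun c => hfix _ (hmem c),
    (Set.range_subset_iff.mpr hmem).antisymm fun x hx => ⟨x, hfix x hx⟩⟩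

theorem stmt11 {V : Type*} [NormedAddCommGroup V] [InnerProductSpace ℝ V]
    [FiniteDimensional ℝ V] (Q : QuadraticForm ℝ V) (hQ : ∀ v : V, Q v = ⟪v, v⟫_ℝ)
    (Z : Submodule ℝ V) (m : ℕ) (u : Fin m → V) (hON : Orthonormal ℝ u)
    (hspan : Submodule.span ℝ (Set.range u) = Z) :
    (∀ c, EprojComp Q (List.ofFn u) (EprojComp Q (List.ofFn u) c) =
        EprojComp Q (List.ofFn u) c) ∧
      Set.range (EprojComp Q (List.ofFn u)) =
        (Algebra.adjoin ℝ (ι Q '' (Zᗮ : Set V)) : Set (CliffordAlgebra Q)) :=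
  stmt11_general Q hQ Z m u hON hspan
end

section
/- Let V be a finite-dimensional real inner product space and Z ⊆ V a subspace. Then the supercommutant of C(Z) in C(V) equals C(Z⊥): an element a ∈ C(V) satisfies z·a = γ(a)·z for all z ∈ Z if and only if a belongs to the subalgebra generated by Z⊥. -/
open CliffordAlgebra InnerProductSpace

section Aux
variable {V : Type*} [NormedAddCommGroup V] [InnerProductSpace ℝ V]
variable (Q : QuadraticForm ℝ V)

lemma auxOrtho (hQ : ∀ v : V, Q v = ⟪v, v⟫_ℝ) {z w : V} (h : ⟪z, w⟫_ℝ = 0) :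
    Q.IsOrtho z w := by
  rw [QuadraticMap.isOrtho_def, hQ, hQ, hQ, real_inner_add_add_self, h]
  ring

lemma auxSupercomm (hQ : ∀ v : V, Q v = ⟪v, v⟫_ℝ) (S : Set V) {z : V}
    (hz : ∀ w ∈ S, ⟪z, w⟫_ℝ = 0) {a : CliffordAlgebra Q}
    (ha : a ∈ Algebra.adjoin ℝ (ι Q '' S)) :
    ι Q z * a = involute a * ι Q z := by
  induction ha using Algebra.adjoin_induction with
  | mem x hx =>
      obtain ⟨w, hw, rfl⟩ := hx
      rw [involute_ι, ι_mul_ι_comm_of_isOrtho (auxOrtho Q hQ (hz w hw)), neg_mul]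
  | algebraMap r => simp [Algebra.commutes]
  | add x y hx hy ihx ihy => simp [mul_add, add_mul, ihx, ihy]
  | mul x y hx hy ihx ihy => rw [map_mul, ← mul_assoc, ihx, mul_assoc, ihy, mul_assoc]

lemma auxInvoluteMem (S : Set V) {a : CliffordAlgebra Q}
    (ha : a ∈ Algebra.adjoin ℝ (ι Q '' S)) :
    involute a ∈ Algebra.adjoin ℝ (ι Q '' S) := by
  induction ha using Algebra.adjoin_induction with
  | mem x hx =>
      obtain ⟨w, hw, rfl⟩ := hx
      rw [involute_ι]
      exact neg_mem (Algebra.subset_adjoin ⟨w, hw, rfl⟩)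
  | algebraMap r => simpa using Subalgebra.algebraMap_mem (Algebra.adjoin ℝ (ι Q '' S)) r
  | add x y hx hy ihx ihy => simpa using add_mem ihx ihy
  | mul x y hx hy ihx ihy => simpa using mul_mem ihx ihy

end Aux

section Aux2
variable {V : Type*} [NormedAddCommGroup V] [InnerProductSpace ℝ V]
variable (Q : QuadraticForm ℝ V)

lemma auxDecomp (hQ : ∀ v : V, Q v = ⟪v, v⟫_ℝ) {W W' : Submodule ℝ V} {e : V}
    (he : ⟪e, e⟫_ℝ = 1) (heW' : ∀ w ∈ W', ⟪e, w⟫_ℝ = 0)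
    (hproj : ∀ v ∈ W, v - ⟪e, v⟫_ℝ • e ∈ W')
    {a : CliffordAlgebra Q} (ha : a ∈ Algebra.adjoin ℝ (ι Q '' W)) :
    ∃ b c, b ∈ Algebra.adjoin ℝ (ι Q '' W') ∧ c ∈ Algebra.adjoin ℝ (ι Q '' W') ∧
      a = b + ι Q e * c := by
  have hee : ι Q e * ι Q e = 1 := by rw [ι_sq_scalar, hQ, he, map_one]
  have hcom : ∀ x ∈ Algebra.adjoin ℝ (ι Q '' (W' : Set V)), ι Q e * x = involute x * ι Q e :=
    fun x hx => auxSupercomm Q hQ _ heW' hx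
  have hcom' : ∀ x ∈ Algebra.adjoin ℝ (ι Q '' (W' : Set V)), x * ι Q e = ι Q e * involute x := by
    intro x hx
    have := hcom (involute x) (auxInvoluteMem Q _ hx)
    rwa [involute_involute, eq_comm] at this
  induction ha using Algebra.adjoin_induction with
  | mem x hx =>
      obtain ⟨v, hv, rfl⟩ := hx
      refine ⟨ι Q (v - ⟪e, v⟫_ℝ • e), algebraMap ℝ _ ⟪e, v⟫_ℝ,
        Algebra.subset_adjoin ⟨_, hproj v hv, rfl⟩, Subalgebra.algebraMap_mem _ _, ?_⟩
      rw [map_sub, map_smul, ← Algebra.commutes, ← Algebra.smul_def, sub_add_cancel]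
  | algebraMap r =>
      exact ⟨algebraMap ℝ _ r, 0, Subalgebra.algebraMap_mem _ r, zero_mem _, by simp⟩
  | add x y hx hy ihx ihy =>
      obtain ⟨b₁, c₁, hb₁, hc₁, rfl⟩ := ihx
      obtain ⟨b₂, c₂, hb₂, hc₂, rfl⟩ := ihy
      exact ⟨b₁ + b₂, c₁ + c₂, add_mem hb₁ hb₂, add_mem hc₁ hc₂, by rw [mul_add]; abel⟩
  | mul x y hx hy ihx ihy =>
      obtain ⟨b₁, c₁, hb₁, hc₁, rfl⟩ := ihx
      obtain ⟨b₂, c₂, hb₂, hc₂, rfl⟩ := ihy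
      refine ⟨b₁ * b₂ + involute c₁ * c₂, involute b₁ * c₂ + c₁ * b₂,
        add_mem (mul_mem hb₁ hb₂) (mul_mem (auxInvoluteMem Q _ hc₁) hc₂),
        add_mem (mul_mem (auxInvoluteMem Q _ hb₁) hc₂) (mul_mem hc₁ hb₂), ?_⟩
      have h1 : b₁ * (ι Q e * c₂) = ι Q e * (involute b₁ * c₂) := by
        rw [← mul_assoc, hcom' b₁ hb₁, mul_assoc]
      have h2 : (ι Q e * c₁) * (ι Q e * c₂) = involute c₁ * c₂ := by
        rw [mul_assoc, ← mul_assoc c₁, hcom' c₁ hc₁, ← mul_assoc, ← mul_assoc, hee, one_mul]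
      rw [add_mul, mul_add, mul_add, h1, h2, mul_add (ι Q e), ← mul_assoc (ι Q e) c₁ b₂]
      abel

lemma auxKill (hQ : ∀ v : V, Q v = ⟪v, v⟫_ℝ) {W W' : Submodule ℝ V} {e : V}
    (he : ⟪e, e⟫_ℝ = 1) (heW' : ∀ w ∈ W', ⟪e, w⟫_ℝ = 0)
    (hproj : ∀ v ∈ W, v - ⟪e, v⟫_ℝ • e ∈ W')
    {a : CliffordAlgebra Q} (ha : a ∈ Algebra.adjoin ℝ (ι Q '' W))
    (hsc : ι Q e * a = involute a * ι Q e) :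
    a ∈ Algebra.adjoin ℝ (ι Q '' W') := by
  have hee : ι Q e * ι Q e = 1 := by rw [ι_sq_scalar, hQ, he, map_one]
  have hcom : ∀ x ∈ Algebra.adjoin ℝ (ι Q '' (W' : Set V)), ι Q e * x = involute x * ι Q e :=
    fun x hx => auxSupercomm Q hQ _ heW' hx
  obtain ⟨b, c, hb, hc, rfl⟩ := auxDecomp Q hQ he heW' hproj ha
  have hL : ι Q e * (b + ι Q e * c) = ι Q e * b + c := by
    rw [mul_add, ← mul_assoc, hee, one_mul]
  have hR : involute (b + ι Q e * c) * ι Q e = ι Q e * b - c := by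
    have h1 : involute b * ι Q e = ι Q e * b := (hcom b hb).symm
    have h2 : ι Q e * involute c = c * ι Q e := by
      have := hcom (involute c) (auxInvoluteMem Q _ hc)
      rwa [involute_involute] at this
    rw [map_add, map_mul, involute_ι, add_mul, h1, neg_mul, neg_mul, mul_assoc,
      ← mul_assoc (ι Q e), h2, mul_assoc, hee, mul_one, sub_eq_add_neg]
  rw [hL, hR] at hsc
  have hc0 : c = 0 := by
    have h3 : c + c = 0 := by
      have := congrArg (fun t => t - (ι Q e * b - c)) hsc
      simpa using this
    have h4 : (2 : ℝ) • c = 0 := by rw [two_smul]; exact h3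
    simpa using (smul_eq_zero.mp h4).resolve_left (by norm_num)
  rw [hc0, mul_zero, add_zero]
  exact hb

end Aux2

section Aux3
variable {V : Type*} [NormedAddCommGroup V] [InnerProductSpace ℝ V]
variable (Q : QuadraticForm ℝ V)

lemma auxMemOrthSpan {n : ℕ} (e : Fin n → V) (v : V) :
    v ∈ (Submodule.span ℝ (Set.range e))ᗮ ↔ ∀ i, ⟪e i, v⟫_ℝ = 0 := by
  rw [Submodule.mem_orthogonal]
  constructor
  · intro h i
    exact h (e i) (Submodule.subset_span ⟨i, rfl⟩)
  · intro h u hu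
    induction hu using Submodule.span_induction with
    | mem x hx => obtain ⟨i, rfl⟩ := hx; exact h i
    | zero => simp
    | add x y hx hy ihx ihy => rw [inner_add_left, ihx, ihy]; ring
    | smul r x hx ihx => rw [real_inner_smul_left, ihx]; ring

lemma auxTop (a : CliffordAlgebra Q) : a ∈ Algebra.adjoin ℝ (ι Q '' Set.univ) := by
  induction a using CliffordAlgebra.induction with
  | algebraMap r => exact Subalgebra.algebraMap_mem _ r
  | ι v => exact Algebra.subset_adjoin ⟨v, trivial, rfl⟩
  | mul x y hx hy => exact mul_mem hx hy
  | add x y hx hy => exact add_mem hx hy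

lemma auxMain (hQ : ∀ v : V, Q v = ⟪v, v⟫_ℝ) :
    ∀ (n : ℕ) (e : Fin n → V), Orthonormal ℝ e →
    ∀ a : CliffordAlgebra Q, (∀ i, ι Q (e i) * a = involute a * ι Q (e i)) →
    a ∈ Algebra.adjoin ℝ (ι Q '' ((Submodule.span ℝ (Set.range e))ᗮ : Set V)) := by
  intro n
  induction n with
  | zero =>
      intro e _ a _
      have : Set.range e = ∅ := Set.range_eq_empty e
      rw [this, Submodule.span_empty, Submodule.bot_orthogonal_eq_top]
      simpa using auxTop Q a
  | succ n ih =>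
      intro e he a ha
      have hite := orthonormal_iff_ite.mp he
      set f : Fin n → V := e ∘ Fin.succ with hf
      have hfo : Orthonormal ℝ f := he.comp Fin.succ (Fin.succ_injective n)
      have haW : a ∈ Algebra.adjoin ℝ (ι Q '' ((Submodule.span ℝ (Set.range f))ᗮ : Set V)) :=
        ih f hfo a fun i => ha i.succ
      have he00 : ⟪e 0, e 0⟫_ℝ = 1 := by simpa using hite 0 0
      have heW' : ∀ w ∈ (Submodule.span ℝ (Set.range e))ᗮ, ⟪e 0, w⟫_ℝ = 0 := by
        intro w hw
        exact (auxMemOrthSpan e w).mp hw 0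
      have hproj : ∀ v ∈ (Submodule.span ℝ (Set.range f))ᗮ,
          v - ⟪e 0, v⟫_ℝ • e 0 ∈ (Submodule.span ℝ (Set.range e))ᗮ := by
        intro v hv
        rw [auxMemOrthSpan]
        intro i
        rw [inner_sub_right, real_inner_smul_right]
        induction i using Fin.cases with
        | zero => rw [he00]; ring
        | succ j =>
            have h1 : ⟪e j.succ, v⟫_ℝ = 0 := (auxMemOrthSpan f v).mp hv j
            have h2 : ⟪e j.succ, e 0⟫_ℝ = 0 := by
              simpa [Fin.succ_ne_zero j] using hite j.succ 0
            rw [h1, h2]; ring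
      exact auxKill Q hQ he00 heW' hproj haW (ha 0)

end Aux3

theorem stmt13 {V : Type*} [NormedAddCommGroup V] [InnerProductSpace ℝ V]
    [FiniteDimensional ℝ V] (Q : QuadraticForm ℝ V) (hQ : ∀ v : V, Q v = ⟪v, v⟫_ℝ)
    (Z : Submodule ℝ V) (a : CliffordAlgebra Q) :
    (∀ z ∈ Z, ι Q z * a = involute a * ι Q z) ↔
      a ∈ Algebra.adjoin ℝ (ι Q '' (Zᗮ : Set V)) := by
  constructor
  · intro h
    set b := stdOrthonormalBasis ℝ Z
    set e : Fin (Module.finrank ℝ Z) → V := fun i => (b i : V) with hedef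
    have heo : Orthonormal ℝ e := by
      rw [orthonormal_iff_ite]
      intro i j
      have := orthonormal_iff_ite.mp b.orthonormal i j
      simpa [hedef, Submodule.coe_inner] using this
    have hspan : Submodule.span ℝ (Set.range e) = Z := by
      have h1 : Set.range e = Z.subtype '' Set.range b := by
        rw [← Set.range_comp]; rfl
      rw [h1, ← Submodule.map_span, ← b.coe_toBasis, b.toBasis.span_eq, Submodule.map_top,
        Submodule.range_subtype]
    have := auxMain Q hQ _ e heo a fun i => h (e i) (by rw [← hspan]; exact Submodule.subset_span ⟨i, rfl⟩)
    rwa [hspan] at this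
  · intro h z hz
    refine auxSupercomm Q hQ _ (fun w hw => ?_) h
    exact (Submodule.mem_orthogonal Z w).mp hw z hz
end
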